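/- For x ∈ S^{p-1} and tangent vector z at x with ‖z‖ ≤ π/2, the geodesic distance between exp_x(z) and R_x(z) satisfies arccos(exp_x(z) · R_x(z)) ≤ ‖z‖ − arctan(‖z‖). -/

import Mathlib

/-!
Both `exp_x(z)` and `R_x(z)` lie on the great circle through `x` in the direction `z/‖z‖`, at arc
lengths `‖z‖` and `arctan ‖z‖` from `x`. Their inner product is therefore `cos (‖z‖ - arctan ‖z‖)`,
and `arccos (cos θ) ≤ θ` for every `θ ≥ 0`.
-/

open Real

namespace Real

theorem arctan_le_self {x : ℝ} (hx : 0 ≤ x) : arctan x ≤ x := by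
  simpa only [tan_arctan] using le_tan (arctan_nonneg.2 hx) (arctan_lt_pi_div_two x)

theorem arccos_cos_le {θ : ℝ} (hθ : 0 ≤ θ) : arccos (cos θ) ≤ θ := by
  rcases le_or_gt θ π with hθπ | hπθ
  · exact (arccos_cos hθ hθπ).le
  · exact (arccos_le_pi _).trans hπθ.le

theorem cos_sub_arctan (r : ℝ) : cos (r - arctan r) = (cos r + sin r * r) / √(1 + r ^ 2) := by
  rw [cos_sub, cos_arctan, sin_arctan]
  ring

end Real

section InnerProductSpace

variable {E : Type*} [NormedAddCommGroup E] [InnerProductSpace ℝ E]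

theorem norm_add_of_norm_eq_one_of_inner_eq_zero {x z : E} (hx : ‖x‖ = 1)
    (hz : inner ℝ x z = 0) : ‖x + z‖ = √(1 + ‖z‖ ^ 2) := by
  rw [← sqrt_sq (norm_nonneg _), sq, norm_add_sq_eq_norm_sq_add_norm_sq_real hz, hx, sq, one_mul]

theorem inner_expMap_retraction {x z : E} (hx : ‖x‖ = 1) (hz : inner ℝ x z = 0) :
    inner ℝ (cos ‖z‖ • x + sin ‖z‖ • (‖z‖⁻¹ • z)) (‖x + z‖⁻¹ • (x + z)) =
      cos (‖z‖ - arctan ‖z‖) := by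
  have hzx : inner ℝ z x = 0 := by rwa [real_inner_comm]
  rw [norm_add_of_norm_eq_one_of_inner_eq_zero hx hz, cos_sub_arctan]
  simp only [inner_add_left, inner_add_right, real_inner_smul_left, real_inner_smul_right,
    real_inner_self_eq_norm_sq, hz, hzx, hx]
  rcases eq_or_ne ‖z‖ 0 with h0 | h0
  · simp [h0]
  · field_simp
    ring

end InnerProductSpace

theorem dist_expMap_retraction_le_general (p : ℕ) (x z : EuclideanSpace ℝ (Fin p))
    (hx : ‖x‖ = 1) (hz : (inner ℝ x z : ℝ) = 0) :
    Real.arccos (inner ℝ (Real.cos ‖z‖ • x + Real.sin ‖z‖ • (‖z‖⁻¹ • z))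
        (‖x + z‖⁻¹ • (x + z)) : ℝ) ≤ ‖z‖ - Real.arctan ‖z‖ := by
  rw [inner_expMap_retraction hx hz]
  exact arccos_cos_le (sub_nonneg.2 (arctan_le_self (norm_nonneg z)))

theorem dist_expMap_retraction_le (p : ℕ) (x z : EuclideanSpace ℝ (Fin p))
    (hx : ‖x‖ = 1) (hz : (inner ℝ x z : ℝ) = 0) (hz0 : z ≠ 0) (hzle : ‖z‖ ≤ π / 2) :
    Real.arccos (inner ℝ (Real.cos ‖z‖ • x + Real.sin ‖z‖ • (‖z‖⁻¹ • z))
        (‖x + z‖⁻¹ • (x + z)) : ℝ) ≤ ‖z‖ - Real.arctan ‖z‖ :=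
  dist_expMap_retraction_le_general p x z hx hz
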